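/- arXiv:2406.09427 — 5 statements merged into one kernel-verified Lean document; each statement's English description precedes it below -/
import Mathlib

section
/- Let d ≥ 2, let s : {1,...,d} → ℝ satisfy s_1 = 1, s strictly increasing with nonincreasing increments, and suppose s_{i+1}/(i+1) < λ < s_i/i for some i ∈ {1,...,d−1}. Define y*_i = (1/i)·(λ − s_{i+1}/(i+1)) / (s_i/i − s_{i+1}/(i+1)), y*_{i+1} = (1/(i+1))·(s_i/i − λ) / (s_i/i − s_{i+1}/(i+1)), and y*_j = 0 for j ∉ {i, i+1}. Then y* is feasible for the problem minimize Σ y_j subject to Σ s_j y_j = λ, Σ j·y_j ≤ 1, y ≥ 0; moreover y*_i > 0, y*_{i+1} > 0, Σ_j s_j y*_j = λ, and Σ_j j·y*_j = 1. -/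
/-!
Put `p = s i / i` and `q = s (i + 1) / (i + 1)`, so that `q < λ < p`. Then
`i y*_i = (λ - q) / (p - q)` and `(i + 1) y*_(i+1) = (p - λ) / (p - q)` are the positive weights
writing `λ` as a convex combination of `p` and `q`: they sum to `1 = Σ j y*_j`, and the
combination they give is `Σ s_j y*_j = λ`.
-/

section TwoPoint

variable {a b u v lam : ℝ}

theorem two_point_index_sum_eq_one (ha : a ≠ 0) (hb : b ≠ 0) (hD : u / a - v / b ≠ 0) :
    a * (1 / a * (lam - v / b) / (u / a - v / b)) +
      b * (1 / b * (u / a - lam) / (u / a - v / b)) = 1 := by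
  rw [mul_div_assoc', mul_div_assoc', ← add_div, div_eq_one_iff_eq hD]
  field_simp
  ring

theorem two_point_value_sum_eq (ha : a ≠ 0) (hb : b ≠ 0) (hD : u / a - v / b ≠ 0) :
    u * (1 / a * (lam - v / b) / (u / a - v / b)) +
      v * (1 / b * (u / a - lam) / (u / a - v / b)) = lam := by
  rw [mul_div_assoc', mul_div_assoc', ← add_div, div_eq_iff hD]
  field_simp
  ring

end TwoPoint

theorem stmt_5_general (d : ℕ) (s : ℕ → ℝ)
    (lam : ℝ) (i : ℕ) (hi1 : 1 ≤ i) (hid : i + 1 ≤ d)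
    (hlo : s (i + 1) / ((i : ℝ) + 1) < lam) (hhi : lam < s i / (i : ℝ))
    (ystar : ℕ → ℝ)
    (hyi : ystar i = (1 / (i : ℝ)) * (lam - s (i + 1) / ((i : ℝ) + 1)) /
      (s i / (i : ℝ) - s (i + 1) / ((i : ℝ) + 1)))
    (hyi1 : ystar (i + 1) = (1 / ((i : ℝ) + 1)) * (s i / (i : ℝ) - lam) /
      (s i / (i : ℝ) - s (i + 1) / ((i : ℝ) + 1)))
    (hy0 : ∀ j, j ≠ i → j ≠ i + 1 → ystar j = 0) :
    0 < ystar i ∧ 0 < ystar (i + 1) ∧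
    (∀ j ∈ Finset.Icc 1 d, 0 ≤ ystar j) ∧
    (∑ j ∈ Finset.Icc 1 d, s j * ystar j) = lam ∧
    (∑ j ∈ Finset.Icc 1 d, (j : ℝ) * ystar j) = 1 := by
  have hi : (0 : ℝ) < i := by exact_mod_cast hi1
  have hD : 0 < s i / (i : ℝ) - s (i + 1) / ((i : ℝ) + 1) := by linarith
  have hyi_pos : 0 < ystar i := by
    have := sub_pos.2 hlo
    rw [hyi]
    positivity
  have hyi1_pos : 0 < ystar (i + 1) := by
    have := sub_pos.2 hhi
    rw [hyi1]
    positivity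
  have hsum (f : ℕ → ℝ) :
      ∑ j ∈ Finset.Icc 1 d, f j * ystar j = f i * ystar i + f (i + 1) * ystar (i + 1) :=
    Finset.sum_eq_add_of_mem i (i + 1) (Finset.mem_Icc.2 ⟨hi1, by omega⟩)
      (Finset.mem_Icc.2 ⟨by omega, hid⟩) (by omega)
      fun j _ hj => by rw [hy0 j hj.1 hj.2, mul_zero]
  refine ⟨hyi_pos, hyi1_pos, fun j _ => ?_, ?_, ?_⟩
  · obtain rfl | hji := eq_or_ne j i
    · exact hyi_pos.le
    obtain rfl | hji1 := eq_or_ne j (i + 1)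
    · exact hyi1_pos.le
    exact (hy0 j hji hji1).ge
  · rw [hsum, hyi, hyi1]
    exact two_point_value_sum_eq hi.ne' (by positivity) hD.ne'
  · rw [hsum, hyi, hyi1]
    push_cast
    exact two_point_index_sum_eq_one hi.ne' (by positivity) hD.ne'

/-- The explicit two-component candidate is feasible, with strictly positive
components, and satisfies both linear equations exactly. -/
theorem stmt_5 (d : ℕ) (hd : 2 ≤ d) (s : ℕ → ℝ) (hs0 : s 0 = 0) (hs1 : s 1 = 1)
    (hmono : ∀ j, j < d → s j < s (j + 1))
    (hconc : ∀ j, 1 ≤ j → j + 1 ≤ d → s (j + 1) - s j ≤ s j - s (j - 1))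
    (lam : ℝ) (i : ℕ) (hi1 : 1 ≤ i) (hid : i + 1 ≤ d)
    (hlo : s (i + 1) / ((i : ℝ) + 1) < lam) (hhi : lam < s i / (i : ℝ))
    (ystar : ℕ → ℝ)
    (hyi : ystar i = (1 / (i : ℝ)) * (lam - s (i + 1) / ((i : ℝ) + 1)) /
      (s i / (i : ℝ) - s (i + 1) / ((i : ℝ) + 1)))
    (hyi1 : ystar (i + 1) = (1 / ((i : ℝ) + 1)) * (s i / (i : ℝ) - lam) /
      (s i / (i : ℝ) - s (i + 1) / ((i : ℝ) + 1)))
    (hy0 : ∀ j, j ≠ i → j ≠ i + 1 → ystar j = 0) :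
    0 < ystar i ∧ 0 < ystar (i + 1) ∧
    (∀ j ∈ Finset.Icc 1 d, 0 ≤ ystar j) ∧
    (∑ j ∈ Finset.Icc 1 d, s j * ystar j) = lam ∧
    (∑ j ∈ Finset.Icc 1 d, (j : ℝ) * ystar j) = 1 :=
  stmt_5_general d s lam i hi1 hid hlo hhi ystar hyi hyi1 hy0
end

section
/- Let d ≥ 2, let s : {1,...,d} → ℝ satisfy s_1 = 1, s strictly increasing with nonincreasing increments (convention s_0 = 0), and suppose s_{i+1}/(i+1) < λ < s_i/i for some i ∈ {1,...,d−1}. Let y* be the two-component vector with y*_i = (1/i)(λ − s_{i+1}/(i+1))/(s_i/i − s_{i+1}/(i+1)), y*_{i+1} = (1/(i+1))(s_i/i − λ)/(s_i/i − s_{i+1}/(i+1)), and zeros elsewhere. Then for every y ∈ ℝ^d with y ≥ 0, Σ_j s_j y_j = λ, and Σ_j j·y_j ≤ 1, we have Σ_j y_j ≥ y*_i + y*_{i+1}. That is, y* is an optimal solution of the linear program. -/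
/-!
LP weak duality. With `Δ = s (i+1) - s i` and `E = s i - Δ i`, discrete concavity gives the
supporting line `s j - Δ j ≤ E` for all `j`, so `(u, v) = (1/E, Δ/E)` is feasible for the dual
program (maximize `λ u - v` subject to `s j u - j v ≤ 1`, `v ≥ 0`). Its value `(λ - Δ)/E`
bounds every feasible objective from below, and equals `y*_i + y*_{i+1}`.
-/

open Finset

lemma antitoneOn_sub_of_concave {s : ℕ → ℝ} {d : ℕ}
    (hconc : ∀ j, 1 ≤ j → j + 1 ≤ d → s (j + 1) - s j ≤ s j - s (j - 1)) :
    AntitoneOn (fun k => s (k + 1) - s k) (Set.Iio d) :=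
  antitoneOn_of_succ_le Set.ordConnected_Iio fun k _ _ hk => by
    simpa using hconc (k + 1) (by omega) (by simp at hk; omega)

lemma le_add_mul_sub_of_antitoneOn_sub {s : ℕ → ℝ} {d i j : ℕ}
    (hs : AntitoneOn (fun k => s (k + 1) - s k) (Set.Iio d)) (hi : i < d) (hj : j ≤ d) :
    s j ≤ s i + (s (i + 1) - s i) * ((j : ℝ) - i) := by
  rcases le_total i j with hij | hji
  · induction j, hij using Nat.le_induction with
    | base => simp
    | succ k hik ih =>
      have hk : s (k + 1) - s k ≤ s (i + 1) - s i := hs hi (Set.mem_Iio.2 (by omega)) hik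
      push_cast
      nlinarith [ih (by omega)]
  · induction hji using Nat.decreasingInduction with
    | self => simp
    | of_succ k hki ih =>
      have hk : s (i + 1) - s i ≤ s (k + 1) - s k := hs (Set.mem_Iio.2 (by omega)) hi hki.le
      push_cast at ih
      linarith [ih (by omega)]

lemma le_sum_of_dual_feasible {ι : Type*} (t : Finset ι) (a b y : ι → ℝ) {lam Δ E : ℝ}
    (hE : 0 < E) (hΔ : 0 ≤ Δ) (hdual : ∀ j ∈ t, a j - Δ * b j ≤ E) (hy : ∀ j ∈ t, 0 ≤ y j)
    (ha : ∑ j ∈ t, a j * y j = lam) (hb : ∑ j ∈ t, b j * y j ≤ 1) :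
    (lam - Δ) / E ≤ ∑ j ∈ t, y j := by
  rw [div_le_iff₀ hE, sum_mul]
  calc lam - Δ ≤ lam - Δ * ∑ j ∈ t, b j * y j := by nlinarith
    _ = ∑ j ∈ t, (a j - Δ * b j) * y j := by
      simp only [sub_mul, sum_sub_distrib, ha, mul_sum, mul_assoc]
    _ ≤ ∑ j ∈ t, y j * E :=
      sum_le_sum fun j hj => by nlinarith [hdual j hj, hy j hj]

lemma sub_sub_mul_pos_of_div_lt_div {a b x : ℝ} (hx : 0 < x) (hab : b / (x + 1) < a / x) :
    0 < a - (b - a) * x := by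
  rw [div_lt_div_iff₀ (by linarith) hx] at hab
  linarith

lemma two_point_sum_eq {a b lam x : ℝ} (hx : 0 < x) (hab : b / (x + 1) < a / x) :
    1 / x * (lam - b / (x + 1)) / (a / x - b / (x + 1)) +
      1 / (x + 1) * (a / x - lam) / (a / x - b / (x + 1)) =
      (lam - (b - a)) / (a - (b - a) * x) := by
  have hD : a / x - b / (x + 1) ≠ 0 := (sub_pos.2 hab).ne'
  have hE : a - (b - a) * x ≠ 0 := (sub_sub_mul_pos_of_div_lt_div hx hab).ne'
  field_simp
  ring

theorem stmt_7_general (d : ℕ) (s : ℕ → ℝ)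
    (hmono : ∀ j, j < d → s j < s (j + 1))
    (hconc : ∀ j, 1 ≤ j → j + 1 ≤ d → s (j + 1) - s j ≤ s j - s (j - 1))
    (lam : ℝ) (i : ℕ) (hi1 : 1 ≤ i) (hid : i + 1 ≤ d)
    (hlo : s (i + 1) / ((i : ℝ) + 1) < lam) (hhi : lam < s i / (i : ℝ))
    (ystar : ℕ → ℝ)
    (hyi : ystar i = (1 / (i : ℝ)) * (lam - s (i + 1) / ((i : ℝ) + 1)) /
      (s i / (i : ℝ) - s (i + 1) / ((i : ℝ) + 1)))
    (hyi1 : ystar (i + 1) = (1 / ((i : ℝ) + 1)) * (s i / (i : ℝ) - lam) /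
      (s i / (i : ℝ) - s (i + 1) / ((i : ℝ) + 1))) :
    ∀ y : ℕ → ℝ,
      (∀ j ∈ Finset.Icc 1 d, 0 ≤ y j) →
      (∑ j ∈ Finset.Icc 1 d, s j * y j) = lam →
      (∑ j ∈ Finset.Icc 1 d, (j : ℝ) * y j) ≤ 1 →
      ystar i + ystar (i + 1) ≤ ∑ j ∈ Finset.Icc 1 d, y j := by
  intro y hy hsum hlin
  have hi : (0 : ℝ) < i := by exact_mod_cast hi1
  have hratio : s (i + 1) / ((i : ℝ) + 1) < s i / i := hlo.trans hhi
  rw [hyi, hyi1, two_point_sum_eq hi hratio]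
  refine le_sum_of_dual_feasible _ s (fun j => (j : ℝ)) y
    (sub_sub_mul_pos_of_div_lt_div hi hratio) (sub_nonneg.2 (hmono i (by omega)).le)
    (fun j hj => ?_) hy hsum hlin
  have hline := le_add_mul_sub_of_antitoneOn_sub (antitoneOn_sub_of_concave hconc)
    (by omega : i < d) (mem_Icc.1 hj).2
  linarith

/-- The explicit two-component vector is an optimal solution of the LP:
every feasible y has objective at least ystar i + ystar (i+1). -/
theorem stmt_7 (d : ℕ) (hd : 2 ≤ d) (s : ℕ → ℝ) (hs0 : s 0 = 0) (hs1 : s 1 = 1)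
    (hmono : ∀ j, j < d → s j < s (j + 1))
    (hconc : ∀ j, 1 ≤ j → j + 1 ≤ d → s (j + 1) - s j ≤ s j - s (j - 1))
    (lam : ℝ) (i : ℕ) (hi1 : 1 ≤ i) (hid : i + 1 ≤ d)
    (hlo : s (i + 1) / ((i : ℝ) + 1) < lam) (hhi : lam < s i / (i : ℝ))
    (ystar : ℕ → ℝ)
    (hyi : ystar i = (1 / (i : ℝ)) * (lam - s (i + 1) / ((i : ℝ) + 1)) /
      (s i / (i : ℝ) - s (i + 1) / ((i : ℝ) + 1)))
    (hyi1 : ystar (i + 1) = (1 / ((i : ℝ) + 1)) * (s i / (i : ℝ) - lam) /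
      (s i / (i : ℝ) - s (i + 1) / ((i : ℝ) + 1)))
    (hy0 : ∀ j, j ≠ i → j ≠ i + 1 → ystar j = 0) :
    ∀ y : ℕ → ℝ,
      (∀ j ∈ Finset.Icc 1 d, 0 ≤ y j) →
      (∑ j ∈ Finset.Icc 1 d, s j * y j) = lam →
      (∑ j ∈ Finset.Icc 1 d, (j : ℝ) * y j) ≤ 1 →
      ystar i + ystar (i + 1) ≤ ∑ j ∈ Finset.Icc 1 d, y j :=
  stmt_7_general d s hmono hconc lam i hi1 hid hlo hhi ystar hyi hyi1
end

section
/- Let d ≥ 2, let s : {1,...,d} → ℝ satisfy s_1 = 1, s strictly increasing, s_i/i nonincreasing, and suppose s_{i+1}/(i+1) < λ < s_i/i for some i ∈ {1,...,d−1}, together with the strict concavity condition s_i − s_{i−1} > s_{i+1} − s_i > s_{i+2} − s_{i+1} (whenever the indices i−1 and i+2 lie in range, with s_0 = 0). Then the two-component vector y* (with y*_i, y*_{i+1} as in the explicit formulas and zeros elsewhere) is the UNIQUE optimal solution of: minimize Σ y_j subject to Σ s_j y_j = λ, Σ j·y_j ≤ 1, y ≥ 0. -/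
/-! The line `j ↦ c + Δ * j` through `(i, s i)` and `(i + 1, s (i + 1))`, with
`Δ = s (i + 1) - s i`, lies above every `s j`, and strictly above those with `j ∉ {i, i + 1}`, by
concavity of `s`. So `(c, Δ)` is a dual certificate: for feasible `y`,
`λ = ∑ s j * y j ≤ c * ∑ y j + Δ * ∑ j * y j ≤ c * ∑ y j + Δ`, while `c * ∑ y* j = λ - Δ`.
Moreover `c = (i + 1) * s i - i * s (i + 1) > 0` because `s (i + 1) / (i + 1) < s i / i`.
Equality forces `y` to vanish off `{i, i + 1}` and `∑ j * y j = 1`; the remaining `2 × 2` system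
has determinant `c`, so its only solution is `y*`. -/

open Finset

section Increments

variable {s : ℕ → ℝ} {Δ : ℝ}

theorem antitoneOn_increment {d : ℕ}
    (hconc : ∀ k, 1 ≤ k → k + 1 ≤ d → s (k + 1) - s k ≤ s k - s (k - 1)) :
    AntitoneOn (fun k => s (k + 1) - s k) (Set.Iio d) :=
  antitoneOn_of_succ_le Set.ordConnected_Iio fun k _ _ hk1 => by
    simpa [Order.succ_eq_add_one] using hconc (k + 1) (by omega) hk1

theorem sub_mul_lt_of_lt_increment {i j : ℕ} (h : ∀ k < i, Δ < s (k + 1) - s k)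
    (hji : j < i) : s j - j * Δ < s i - i * Δ :=
  strictMonoOn_Iic_of_lt_succ (ψ := fun k : ℕ => s k - k * Δ)
    (fun k hk => by simp only [Order.succ_eq_add_one]; push_cast; linarith [h k hk])
    (Set.mem_Iic.2 hji.le) Set.self_mem_Iic hji

theorem sub_mul_lt_of_increment_lt {m n j : ℕ}
    (h : ∀ k, m ≤ k → k < n → s (k + 1) - s k < Δ) (hmj : m < j) (hjn : j ≤ n) :
    s j - j * Δ < s m - m * Δ :=
  strictAntiOn_of_succ_lt Set.ordConnected_Icc (f := fun k : ℕ => s k - k * Δ)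
    (fun k _ hk hk1 => by
      simp only [Order.succ_eq_add_one, Set.mem_Icc] at hk hk1 ⊢
      push_cast
      linarith [h k hk.1 (by omega)])
    (Set.left_mem_Icc.2 (hmj.le.trans hjn)) ⟨hmj.le, hjn⟩ hmj

variable {d i : ℕ} (hinc : AntitoneOn (fun k => s (k + 1) - s k) (Set.Iio d))
  (hi : 1 ≤ i) (hid : i + 1 ≤ d)
  (hstrict1 : s i - s (i - 1) > s (i + 1) - s i)
  (hstrict2 : i + 2 ≤ d → s (i + 1) - s i > s (i + 2) - s (i + 1))
include hinc hi hid hstrict1 hstrict2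

theorem lt_chord {j : ℕ} (hjd : j ≤ d) (hji : j ≠ i) (hji1 : j ≠ i + 1) :
    s j < s i + ((j : ℝ) - i) * (s (i + 1) - s i) := by
  rcases Nat.lt_or_gt_of_ne hji with hlt | hgt
  · have hleft : ∀ k < i, s (i + 1) - s i < s (k + 1) - s k := fun k hk => by
      have := hinc (Set.mem_Iio.2 (by omega : k < d)) (Set.mem_Iio.2 (by omega : i - 1 < d))
        (by omega : k ≤ i - 1)
      simp only [Nat.sub_add_cancel hi] at this
      linarith
    linarith [sub_mul_lt_of_lt_increment hleft hlt]
  · have hright : ∀ k, i + 1 ≤ k → k < d → s (k + 1) - s k < s (i + 1) - s i :=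
      fun k hk hkd => (hinc (Set.mem_Iio.2 (by omega : i + 1 < d)) (Set.mem_Iio.2 hkd) hk).trans_lt
        (hstrict2 (by omega))
    have := sub_mul_lt_of_increment_lt hright (by omega : i + 1 < j) hjd
    push_cast at this
    linarith

theorem le_chord {j : ℕ} (hjd : j ≤ d) :
    s j ≤ s i + ((j : ℝ) - i) * (s (i + 1) - s i) := by
  by_cases hji : j = i
  · simp [hji]
  by_cases hji1 : j = i + 1
  · simp [hji1]
  exact (lt_chord hinc hi hid hstrict1 hstrict2 hjd hji hji1).le

end Increments

section LinearProgram

variable {ι : Type*} {S : Finset ι} {a b y : ι → ℝ} {c Δ lam : ℝ}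

theorem sum_mul_le_of_le_affine (hy : ∀ j ∈ S, 0 ≤ y j) (hab : ∀ j ∈ S, a j ≤ c + Δ * b j) :
    ∑ j ∈ S, a j * y j ≤ c * ∑ j ∈ S, y j + Δ * ∑ j ∈ S, b j * y j := by
  calc ∑ j ∈ S, a j * y j ≤ ∑ j ∈ S, (c + Δ * b j) * y j :=
        sum_le_sum fun j hj => mul_le_mul_of_nonneg_right (hab j hj) (hy j hj)
    _ = c * ∑ j ∈ S, y j + Δ * ∑ j ∈ S, b j * y j := by
        simp only [add_mul, sum_add_distrib, mul_sum, mul_assoc]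

theorem eq_zero_of_sum_mul_eq_affine (hy : ∀ j ∈ S, 0 ≤ y j)
    (hab : ∀ j ∈ S, a j ≤ c + Δ * b j)
    (heq : ∑ j ∈ S, a j * y j = c * ∑ j ∈ S, y j + Δ * ∑ j ∈ S, b j * y j)
    {j : ι} (hj : j ∈ S) (hlt : a j < c + Δ * b j) : y j = 0 := by
  have hgap : ∀ k ∈ S, 0 ≤ (c + Δ * b k - a k) * y k := fun k hk =>
    mul_nonneg (by linarith [hab k hk]) (hy k hk)
  have hsum : ∑ k ∈ S, (c + Δ * b k - a k) * y k = 0 := by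
    simp only [sub_mul, add_mul, sum_sub_distrib, sum_add_distrib, ← mul_sum, mul_assoc, heq]
    ring
  exact (mul_eq_zero.1 ((sum_eq_zero_iff_of_nonneg hgap).1 hsum j hj)).resolve_left
    (by linarith)

variable (hab : ∀ j ∈ S, a j ≤ c + Δ * b j) (hy : ∀ j ∈ S, 0 ≤ y j)
  (ha : ∑ j ∈ S, a j * y j = lam) (hb : ∑ j ∈ S, b j * y j ≤ 1)
include hab hy ha hb

theorem sub_le_mul_sum_of_le_affine (hΔ : 0 ≤ Δ) : lam - Δ ≤ c * ∑ j ∈ S, y j := by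
  have := sum_mul_le_of_le_affine hy hab
  nlinarith

theorem sum_mul_eq_one_and_eq_zero_of_mul_sum_eq (hΔ : 0 < Δ)
    (htight : c * ∑ j ∈ S, y j = lam - Δ) :
    ∑ j ∈ S, b j * y j = 1 ∧ ∀ j ∈ S, a j < c + Δ * b j → y j = 0 := by
  have hle := sum_mul_le_of_le_affine hy hab
  have hb1 : ∑ j ∈ S, b j * y j = 1 := by nlinarith
  refine ⟨hb1, fun j hj hlt => eq_zero_of_sum_mul_eq_affine hy hab ?_ hj hlt⟩
  rw [ha, htight, hb1]
  ring

end LinearProgram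

theorem sum_mul_eq_of_eq_zero_off_pair {ι : Type*} {S : Finset ι} {p q : ι} (hp : p ∈ S)
    (hq : q ∈ S) (hpq : p ≠ q) (y : ι → ℝ) (hy : ∀ j ∈ S, j ≠ p → j ≠ q → y j = 0)
    (f : ι → ℝ) : ∑ j ∈ S, f j * y j = f p * y p + f q * y q :=
  sum_eq_add_of_mem p q hp hq hpq fun j hj h => by rw [hy j hj h.1 h.2, mul_zero]

theorem eq_and_eq_of_det_ne_zero {p q r t x z x' z' : ℝ} (hdet : p * t - q * r ≠ 0)
    (h₁ : p * x + q * z = p * x' + q * z') (h₂ : r * x + t * z = r * x' + t * z') :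
    x = x' ∧ z = z' := by
  constructor <;> apply mul_left_cancel₀ hdet
  · linear_combination t * h₁ - q * h₂
  · linear_combination p * h₂ - r * h₁

theorem two_point_solution {n m u v lam x z : ℝ} (hn : 0 < n) (hm : 0 < m)
    (hlo : v / m < lam) (hhi : lam < u / n)
    (hx : x = 1 / n * (lam - v / m) / (u / n - v / m))
    (hz : z = 1 / m * (u / n - lam) / (u / n - v / m)) :
    0 ≤ x ∧ 0 ≤ z ∧ u * x + v * z = lam ∧ n * x + m * z = 1 := by
  have hD : 0 < u / n - v / m := by linarith
  have hdet : u * m - n * v ≠ 0 := by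
    have := (div_lt_div_iff₀ hm hn).1 (hlo.trans hhi)
    linarith
  subst hx hz
  refine ⟨div_nonneg (mul_nonneg (by positivity) (by linarith)) hD.le,
    div_nonneg (mul_nonneg (by positivity) (by linarith)) hD.le, ?_, ?_⟩
  · rw [div_sub_div _ _ hn.ne' hm.ne']
    field_simp
    ring
  · rw [← div_self hD.ne']
    field_simp
    ring

theorem stmt_8_general (d : ℕ) (s : ℕ → ℝ)
    (hmono : ∀ j, j < d → s j < s (j + 1))
    (hconc : ∀ j, 1 ≤ j → j + 1 ≤ d → s (j + 1) - s j ≤ s j - s (j - 1))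
    (lam : ℝ) (i : ℕ) (hi1 : 1 ≤ i) (hid : i + 1 ≤ d)
    (hlo : s (i + 1) / ((i : ℝ) + 1) < lam) (hhi : lam < s i / (i : ℝ))
    (hstrict1 : s i - s (i - 1) > s (i + 1) - s i)
    (hstrict2 : i + 2 ≤ d → s (i + 1) - s i > s (i + 2) - s (i + 1))
    (ystar : ℕ → ℝ)
    (hyi : ystar i = (1 / (i : ℝ)) * (lam - s (i + 1) / ((i : ℝ) + 1)) /
      (s i / (i : ℝ) - s (i + 1) / ((i : ℝ) + 1)))
    (hyi1 : ystar (i + 1) = (1 / ((i : ℝ) + 1)) * (s i / (i : ℝ) - lam) /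
      (s i / (i : ℝ) - s (i + 1) / ((i : ℝ) + 1)))
    (hy0 : ∀ j, j ≠ i → j ≠ i + 1 → ystar j = 0) :
    ((∀ j ∈ Finset.Icc 1 d, 0 ≤ ystar j) ∧
      (∑ j ∈ Finset.Icc 1 d, s j * ystar j) = lam ∧
      (∑ j ∈ Finset.Icc 1 d, (j : ℝ) * ystar j) ≤ 1) ∧
    (∀ y : ℕ → ℝ,
      (∀ j ∈ Finset.Icc 1 d, 0 ≤ y j) →
      (∑ j ∈ Finset.Icc 1 d, s j * y j) = lam →
      (∑ j ∈ Finset.Icc 1 d, (j : ℝ) * y j) ≤ 1 →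
      (∑ j ∈ Finset.Icc 1 d, ystar j) ≤ (∑ j ∈ Finset.Icc 1 d, y j) ∧
      ((∑ j ∈ Finset.Icc 1 d, y j) = (∑ j ∈ Finset.Icc 1 d, ystar j) →
        ∀ j ∈ Finset.Icc 1 d, y j = ystar j)) := by
  set Δ := s (i + 1) - s i
  set c := s i - i * Δ
  have hΔ : 0 < Δ := sub_pos.2 (hmono i (by omega))
  have hc : 0 < c := by
    have := (div_lt_div_iff₀ (by positivity) (by positivity)).1 (hlo.trans hhi)
    linarith
  have hinc := antitoneOn_increment hconc
  have hsupp : ∀ j ∈ Icc 1 d, s j ≤ c + Δ * j := fun j hj => by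
    linarith [le_chord hinc hi1 hid hstrict1 hstrict2 (mem_Icc.1 hj).2]
  have hiS : i ∈ Icc 1 d := mem_Icc.2 ⟨hi1, by omega⟩
  have hi1S : i + 1 ∈ Icc 1 d := mem_Icc.2 ⟨by omega, hid⟩
  have hpair := sum_mul_eq_of_eq_zero_off_pair hiS hi1S (Nat.ne_add_one i)
  obtain ⟨hyi_nonneg, hyi1_nonneg, hstar_s, hstar_j⟩ :=
    two_point_solution (by positivity) (by positivity) hlo hhi hyi hyi1
  have hstar_sum : c * ∑ j ∈ Icc 1 d, ystar j = lam - Δ := by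
    rw [sum_eq_add_of_mem i (i + 1) hiS hi1S (Nat.ne_add_one i) fun j _ h => hy0 j h.1 h.2]
    linear_combination hstar_s - Δ * hstar_j
  refine ⟨⟨fun j _ => ?_, ?_, ?_⟩, fun y hy hy_s hy_j => ?_⟩
  · obtain rfl | h1 := eq_or_ne j i; · exact hyi_nonneg
    obtain rfl | h2 := eq_or_ne j (i + 1); · exact hyi1_nonneg
    exact (hy0 j h1 h2).ge
  · rw [hpair ystar (fun j _ => hy0 j), hstar_s]
  · rw [hpair ystar (fun j _ => hy0 j)]
    push_cast
    exact hstar_j.le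
  have hlow := sub_le_mul_sum_of_le_affine hsupp hy hy_s hy_j hΔ.le
  refine ⟨le_of_mul_le_mul_left (hstar_sum ▸ hlow) hc, fun heq => ?_⟩
  obtain ⟨hy_j1, hzero⟩ :=
    sum_mul_eq_one_and_eq_zero_of_mul_sum_eq hsupp hy hy_s hy_j hΔ (by rw [heq, hstar_sum])
  have hy0' : ∀ j ∈ Icc 1 d, j ≠ i → j ≠ i + 1 → y j = 0 := fun j hj h1 h2 =>
    hzero j hj (by linarith [lt_chord hinc hi1 hid hstrict1 hstrict2 (mem_Icc.1 hj).2 h1 h2])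
  rw [hpair y hy0'] at hy_s hy_j1
  push_cast at hy_j1
  obtain ⟨hyi', hyi1'⟩ := eq_and_eq_of_det_ne_zero (p := s i) (q := s (i + 1)) (r := i)
    (t := i + 1) (by linarith) (hy_s.trans hstar_s.symm) (hy_j1.trans hstar_j.symm)
  intro j hj
  obtain rfl | h1 := eq_or_ne j i; · exact hyi'
  obtain rfl | h2 := eq_or_ne j (i + 1); · exact hyi1'
  rw [hy0' j hj h1 h2, hy0 j h1 h2]

/-- Under strict concavity at i, the explicit two-component vector is the UNIQUE
optimal solution of the LP. -/
theorem stmt_8 (d : ℕ) (hd : 2 ≤ d) (s : ℕ → ℝ) (hs0 : s 0 = 0) (hs1 : s 1 = 1)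
    (hmono : ∀ j, j < d → s j < s (j + 1))
    (hratio : ∀ j, 1 ≤ j → j + 1 ≤ d → s (j + 1) / ((j : ℝ) + 1) ≤ s j / (j : ℝ))
    (hconc : ∀ j, 1 ≤ j → j + 1 ≤ d → s (j + 1) - s j ≤ s j - s (j - 1))
    (lam : ℝ) (i : ℕ) (hi1 : 1 ≤ i) (hid : i + 1 ≤ d)
    (hlo : s (i + 1) / ((i : ℝ) + 1) < lam) (hhi : lam < s i / (i : ℝ))
    (hstrict1 : s i - s (i - 1) > s (i + 1) - s i)
    (hstrict2 : i + 2 ≤ d → s (i + 1) - s i > s (i + 2) - s (i + 1))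
    (ystar : ℕ → ℝ)
    (hyi : ystar i = (1 / (i : ℝ)) * (lam - s (i + 1) / ((i : ℝ) + 1)) /
      (s i / (i : ℝ) - s (i + 1) / ((i : ℝ) + 1)))
    (hyi1 : ystar (i + 1) = (1 / ((i : ℝ) + 1)) * (s i / (i : ℝ) - lam) /
      (s i / (i : ℝ) - s (i + 1) / ((i : ℝ) + 1)))
    (hy0 : ∀ j, j ≠ i → j ≠ i + 1 → ystar j = 0) :
    ((∀ j ∈ Finset.Icc 1 d, 0 ≤ ystar j) ∧
      (∑ j ∈ Finset.Icc 1 d, s j * ystar j) = lam ∧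
      (∑ j ∈ Finset.Icc 1 d, (j : ℝ) * ystar j) ≤ 1) ∧
    (∀ y : ℕ → ℝ,
      (∀ j ∈ Finset.Icc 1 d, 0 ≤ y j) →
      (∑ j ∈ Finset.Icc 1 d, s j * y j) = lam →
      (∑ j ∈ Finset.Icc 1 d, (j : ℝ) * y j) ≤ 1 →
      (∑ j ∈ Finset.Icc 1 d, ystar j) ≤ (∑ j ∈ Finset.Icc 1 d, y j) ∧
      ((∑ j ∈ Finset.Icc 1 d, y j) = (∑ j ∈ Finset.Icc 1 d, ystar j) →
        ∀ j ∈ Finset.Icc 1 d, y j = ystar j)) :=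
  stmt_8_general d s hmono hconc lam i hi1 hid hlo hhi hstrict1 hstrict2 ystar hyi hyi1 hy0
end

section
/- Let d ≥ 2, let s : {1,...,d} → ℝ satisfy s_1 = 1 and s_i/i nonincreasing in i, let 1 ≤ i₁ < i₂ ≤ d, δ ≥ 0, n ≥ 1, and suppose s_{i₁}/i₁ > s_{i₂}/i₂ and s_{i₂}/(i₂) < λ < s_{i₁}/i₁. Let x ∈ ℝ^d with x ≥ 0 satisfy: (a) i₁·x_{i₁} + i₂·x_{i₂} + Σ_{i < i₁} i·x_i = 1 − i₁/n, and (b) s_{i₁}·x_{i₁} + s_{i₂}·x_{i₂} + Σ_{i < i₁} s_i·x_i ≤ λ + δ, and x_i = 0 for all other indices. Define y*_{i₁} = (1/i₁)(λ − s_{i₂}/i₂)/(s_{i₁}/i₁ − s_{i₂}/i₂) and y*_{i₂} = (1/i₂)(s_{i₁}/i₁ − λ)/(s_{i₁}/i₁ − s_{i₂}/i₂). Then x_{i₁} − y*_{i₁} ≤ (δ/i₁ + s_{i₂}/(n·i₂)) / (s_{i₁}/i₁ − s_{i₂}/i₂) and y*_{i₂} − x_{i₂} ≤ (δ/i₂ +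 s_{i₁}/(n·i₂)) / (s_{i₁}/i₁ − s_{i₂}/i₂). -/
/-!
Write `r i = s i / i` and `g = r i₁ - r i₂ > 0`. Subtracting `r` times the capacity equation (a)
from the rate inequality (b) gives a bound in which the low-index terms contribute
`∑ (s i - r i) x i ≥ 0` whenever `r ≤ r i` for `i < i₁`. Taking `r = r i₂` kills the `x i₂` term and
leaves `i₁ g x i₁ ≤ lam - r i₂ + δ + r i₂ i₁ / n`; taking `r = r i₁` kills the `x i₁` term and leaves
`r i₁ - lam - δ - s i₁ / n ≤ i₂ g x i₂`.
-/

theorem mul_sum_le_sum_of_le_div {ι : Type*} (t : Finset ι) {w c x : ι → ℝ} {r : ℝ}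
    (hw : ∀ i ∈ t, 0 < w i) (hx : ∀ i ∈ t, 0 ≤ x i) (hr : ∀ i ∈ t, r ≤ c i / w i) :
    r * ∑ i ∈ t, w i * x i ≤ ∑ i ∈ t, c i * x i := by
  rw [Finset.mul_sum]
  refine Finset.sum_le_sum fun i hi => ?_
  rw [← mul_assoc]
  exact mul_le_mul_of_nonneg_right ((le_div_iff₀ (hw i hi)).1 (hr i hi)) (hx i hi)

theorem sub_mul_add_sub_mul_le {w₁ w₂ c₁ c₂ x₁ x₂ A B m M r : ℝ} (hAB : r * A ≤ B)
    (ha : w₁ * x₁ + w₂ * x₂ + A = m) (hb : c₁ * x₁ + c₂ * x₂ + B ≤ M) :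
    (c₁ - r * w₁) * x₁ + (c₂ - r * w₂) * x₂ ≤ M - r * m := by
  linear_combination hb + hAB - r * ha

theorem stmt_11_general (d : ℕ) (s : ℕ → ℝ)
    (hratio : ∀ i j, 1 ≤ i → i ≤ j → j ≤ d → s j / (j : ℝ) ≤ s i / (i : ℝ))
    (i₁ i₂ : ℕ) (hi₁ : 1 ≤ i₁) (h12 : i₁ < i₂) (hi₂ : i₂ ≤ d)
    (δ : ℝ) (n : ℕ) (lam : ℝ)
    (hgap : s i₂ / (i₂ : ℝ) < s i₁ / (i₁ : ℝ))
    (x : ℕ → ℝ) (hx0 : ∀ i ∈ Finset.Icc 1 d, 0 ≤ x i)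
    (ha : (i₁ : ℝ) * x i₁ + (i₂ : ℝ) * x i₂ + (∑ i ∈ Finset.Ico 1 i₁, (i : ℝ) * x i)
      = 1 - (i₁ : ℝ) / (n : ℝ))
    (hb : s i₁ * x i₁ + s i₂ * x i₂ + (∑ i ∈ Finset.Ico 1 i₁, s i * x i) ≤ lam + δ)
    (y₁ y₂ : ℝ)
    (hy₁ : y₁ = (1 / (i₁ : ℝ)) * (lam - s i₂ / (i₂ : ℝ)) /
      (s i₁ / (i₁ : ℝ) - s i₂ / (i₂ : ℝ)))
    (hy₂ : y₂ = (1 / (i₂ : ℝ)) * (s i₁ / (i₁ : ℝ) - lam) /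
      (s i₁ / (i₁ : ℝ) - s i₂ / (i₂ : ℝ))) :
    x i₁ - y₁ ≤ (δ / (i₁ : ℝ) + s i₂ / ((n : ℝ) * (i₂ : ℝ))) /
      (s i₁ / (i₁ : ℝ) - s i₂ / (i₂ : ℝ)) ∧
    y₂ - x i₂ ≤ (δ / (i₂ : ℝ) + s i₁ / ((n : ℝ) * (i₂ : ℝ))) /
      (s i₁ / (i₁ : ℝ) - s i₂ / (i₂ : ℝ)) := by
  have hpos₁ : (0 : ℝ) < i₁ := by exact_mod_cast hi₁
  have hpos₂ : (0 : ℝ) < i₂ := by exact_mod_cast (Nat.zero_lt_one.trans_le hi₁).trans h12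
  have hg : 0 < s i₁ / (i₁ : ℝ) - s i₂ / (i₂ : ℝ) := sub_pos.mpr hgap
  have low_sum (j : ℕ) (hj : i₁ ≤ j) (hjd : j ≤ d) :
      s j / (j : ℝ) * ∑ i ∈ Finset.Ico 1 i₁, (i : ℝ) * x i ≤ ∑ i ∈ Finset.Ico 1 i₁, s i * x i := by
    refine mul_sum_le_sum_of_le_div _ (fun i hi => ?_) (fun i hi => hx0 i ?_) (fun i hi => ?_) <;>
      obtain ⟨hi1, hi2⟩ := Finset.mem_Ico.mp hi
    · exact_mod_cast hi1
    · exact Finset.mem_Icc.mpr ⟨hi1, by omega⟩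
    · exact hratio i j hi1 (by omega) hjd
  have elim₂ := sub_mul_add_sub_mul_le (low_sum i₂ h12.le hi₂) ha hb
  have elim₁ := sub_mul_add_sub_mul_le (low_sum i₁ le_rfl (h12.le.trans hi₂)) ha hb
  rw [div_mul_cancel₀ _ hpos₂.ne', sub_self, zero_mul, add_zero] at elim₂
  rw [div_mul_cancel₀ _ hpos₁.ne', sub_self, zero_mul, zero_add] at elim₁
  constructor
  · rw [hy₁, sub_le_iff_le_add, ← add_div, le_div_iff₀ hg]
    refine le_of_mul_le_mul_left ?_ hpos₁
    calc _ = (s i₁ - s i₂ / i₂ * i₁) * x i₁ := by field_simp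
      _ ≤ _ := elim₂
      _ = _ := by field_simp; ring
  · rw [hy₂, sub_le_iff_le_add, div_le_iff₀ hg, add_mul, div_mul_cancel₀ _ hg.ne']
    refine le_of_mul_le_mul_left ?_ hpos₂
    calc _ = s i₁ / i₁ - lam := by field_simp
      _ ≤ δ + s i₁ / i₁ * (i₁ / n) - (s i₂ - s i₁ / i₁ * i₂) * x i₂ := by linarith
      _ = _ := by field_simp; ring

/-- The elimination argument bounding the deviation of x from the two-component
optimizer y*. -/
theorem stmt_11 (d : ℕ) (hd : 2 ≤ d) (s : ℕ → ℝ) (hs1 : s 1 = 1)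
    (hratio : ∀ i j, 1 ≤ i → i ≤ j → j ≤ d → s j / (j : ℝ) ≤ s i / (i : ℝ))
    (i₁ i₂ : ℕ) (hi₁ : 1 ≤ i₁) (h12 : i₁ < i₂) (hi₂ : i₂ ≤ d)
    (δ : ℝ) (hδ : 0 ≤ δ) (n : ℕ) (hn : 1 ≤ n) (lam : ℝ)
    (hgap : s i₂ / (i₂ : ℝ) < s i₁ / (i₁ : ℝ))
    (hlo : s i₂ / (i₂ : ℝ) < lam) (hhi : lam < s i₁ / (i₁ : ℝ))
    (x : ℕ → ℝ) (hx0 : ∀ i ∈ Finset.Icc 1 d, 0 ≤ x i)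
    (ha : (i₁ : ℝ) * x i₁ + (i₂ : ℝ) * x i₂ + (∑ i ∈ Finset.Ico 1 i₁, (i : ℝ) * x i)
      = 1 - (i₁ : ℝ) / (n : ℝ))
    (hb : s i₁ * x i₁ + s i₂ * x i₂ + (∑ i ∈ Finset.Ico 1 i₁, s i * x i) ≤ lam + δ)
    (hxz : ∀ i ∈ Finset.Icc 1 d, i ≠ i₁ → i ≠ i₂ → i₁ ≤ i → x i = 0)
    (y₁ y₂ : ℝ)
    (hy₁ : y₁ = (1 / (i₁ : ℝ)) * (lam - s i₂ / (i₂ : ℝ)) /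
      (s i₁ / (i₁ : ℝ) - s i₂ / (i₂ : ℝ)))
    (hy₂ : y₂ = (1 / (i₂ : ℝ)) * (s i₁ / (i₁ : ℝ) - lam) /
      (s i₁ / (i₁ : ℝ) - s i₂ / (i₂ : ℝ))) :
    x i₁ - y₁ ≤ (δ / (i₁ : ℝ) + s i₂ / ((n : ℝ) * (i₂ : ℝ))) /
      (s i₁ / (i₁ : ℝ) - s i₂ / (i₂ : ℝ)) ∧
    y₂ - x i₂ ≤ (δ / (i₂ : ℝ) + s i₁ / ((n : ℝ) * (i₂ : ℝ))) /
      (s i₁ / (i₁ : ℝ) - s i₂ / (i₂ : ℝ)) :=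
  stmt_11_general d s hratio i₁ i₂ hi₁ h12 hi₂ δ n lam hgap x hx0 ha hb y₁ y₂ hy₁ hy₂
end

section
/- Let d ≥ 1, λ > 0, let s : {1,...,d} → ℝ with s_1 = 1 ≤ s_i for all i, and suppose y* with single nonzero component y*_{i₁} = λ/s_{i₁} (i₁ ∈ {1,...,d}) so that D* = 1/s_{i₁} = (1/λ)Σ_j y*_j. Let x ∈ ℝ^d with x ≥ 0, P_b ∈ [0,1), D ≥ D*, and suppose λ(1 − P_b)·D = Σ_j x_j, λ(1 − P_b) = Σ_j s_j x_j, and Σ_{j ≠ i₁} x_j ≤ 1/n for some n ≥ 1. Then D* ≤ D ≤ D* + 1/(n·λ·(1 − P_b)); in particular |D − D*| ≤ 1/(n·λ·(1 − P_b)). -/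
/-- Sharpened O(1/n) mean-execution-time bound in the single-component case. -/
theorem stmt_14 (d : ℕ) (hd : 1 ≤ d) (lam : ℝ) (hlam : 0 < lam)
    (s : ℕ → ℝ) (hs1 : s 1 = 1) (hs : ∀ i ∈ Finset.Icc 1 d, 1 ≤ s i)
    (i₁ : ℕ) (hi₁ : i₁ ∈ Finset.Icc 1 d)
    (ystar : ℕ → ℝ) (hystar : ∀ i, ystar i = if i = i₁ then lam / s i₁ else 0)
    (Dstar : ℝ) (hDstar : Dstar = 1 / s i₁)
    (hDstar' : Dstar = (1 / lam) * ∑ j ∈ Finset.Icc 1 d, ystar j)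
    (x : ℕ → ℝ) (hx0 : ∀ j ∈ Finset.Icc 1 d, 0 ≤ x j)
    (Pb : ℝ) (hPb0 : 0 ≤ Pb) (hPb1 : Pb < 1)
    (D : ℝ) (hDge : Dstar ≤ D)
    (hlittle : lam * (1 - Pb) * D = ∑ j ∈ Finset.Icc 1 d, x j)
    (hrate : lam * (1 - Pb) = ∑ j ∈ Finset.Icc 1 d, s j * x j)
    (n : ℕ) (hn : 1 ≤ n)
    (hssc : (∑ j ∈ (Finset.Icc 1 d).erase i₁, x j) ≤ 1 / (n : ℝ)) :
    Dstar ≤ D ∧ D ≤ Dstar + 1 / ((n : ℝ) * lam * (1 - Pb)) ∧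
    |D - Dstar| ≤ 1 / ((n : ℝ) * lam * (1 - Pb)) := by
  have hsi1 : 1 ≤ s i₁ := hs i₁ hi₁
  have hsi1pos : 0 < s i₁ := lt_of_lt_of_le one_pos hsi1
  have hPb : 0 < 1 - Pb := by linarith
  have hnpos : (0:ℝ) < n := by exact_mod_cast Nat.lt_of_lt_of_le Nat.zero_lt_one hn
  have hDpos : 0 < Dstar := by rw [hDstar]; positivity
  -- split sum
  have hsplit : ∑ j ∈ Finset.Icc 1 d, x j
      = x i₁ + ∑ j ∈ (Finset.Icc 1 d).erase i₁, x j :=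
    (Finset.add_sum_erase _ _ hi₁).symm
  have hxle : x i₁ ≤ Dstar * (lam * (1 - Pb)) := by
    have h1 : s i₁ * x i₁ ≤ ∑ j ∈ Finset.Icc 1 d, s j * x j := by
      apply Finset.single_le_sum (f := fun j => s j * x j) _ hi₁
      intro j hj
      exact mul_nonneg (le_trans zero_le_one (hs j hj)) (hx0 j hj)
    have h2 : Dstar * (s i₁ * x i₁) = x i₁ := by
      rw [hDstar]; field_simp
    calc x i₁ = Dstar * (s i₁ * x i₁) := h2.symm
      _ ≤ Dstar * (lam * (1 - Pb)) := by
          rw [hrate]; exact mul_le_mul_of_nonneg_left h1 hDpos.le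
  have key : lam * (1 - Pb) * D ≤ Dstar * (lam * (1 - Pb)) + 1 / n := by
    rw [hlittle, hsplit]; linarith
  have hDle : D ≤ Dstar + 1 / ((n : ℝ) * lam * (1 - Pb)) := by
    have hpos : 0 < lam * (1 - Pb) := by positivity
    have : D ≤ (Dstar * (lam * (1 - Pb)) + 1 / n) / (lam * (1 - Pb)) := by
      rw [le_div_iff₀ hpos]; linarith
    have heq : (Dstar * (lam * (1 - Pb)) + 1 / n) / (lam * (1 - Pb))
        = Dstar + 1 / ((n : ℝ) * lam * (1 - Pb)) := by
      field_simp
    linarith [heq ▸ this]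
  refine ⟨hDge, hDle, ?_⟩
  rw [abs_of_nonneg (by linarith)]
  linarith
end
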